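/- Let g: ℝ → ℂ be continuous and 1-periodic with absolutely convergent Fourier series, i.e. g(x) = Σ_{m∈ℤ} c_m e^{2πimx} with Σ_{m∈ℤ}|c_m| < ∞, and let h: ℝ → ℂ be a Schwartz function. Then: (i) for all ξ, x ∈ ℝ, the Bloch transform of the product satisfies (gh)ˇ(ξ, x) = g(x) ȟ(ξ, x); and (ii) if moreover ĥ(z) = 0 for all |z| > π, then for all ξ with |ξ| < π and all x ∈ ℝ: (gh)ˇ(ξ, x) = g(x) ĥ(ξ). -/

import Mathlib

/-!
Expanding `g` in its Fourier series, the Fourier transform of `g h` is the absolutely convergent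
superposition `Σ_m c_m ĥ(z - 2πm)` of modulated copies of `ĥ`. Inserting this into the Bloch
series gives a double series over `ℤ × ℤ` which, after the shear `(k, m) ↦ (m, k - m)`, is the
Cauchy product of `Σ_m c_m e^{2πimx} = g(x)` and `Σ_j e^{2πijx} ĥ(ξ + 2πj) = ȟ(ξ, x)`; everything
converges absolutely because `Σ |c_m| < ∞` and `ĥ` is again a Schwartz function. If `ĥ` vanishes
outside `[-π, π]` and `|ξ| < π`, then `|ξ + 2πk| > π` for `k ≠ 0`, so only the term `k = 0` of the
Bloch series survives.
-/

open MeasureTheory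

/-- The Fourier transform with the paper's normalization:
`ĝ(z) = (1/(2π)) ∫_ℝ e^{-iωz} g(ω) dω`. -/
noncomputable def fourierT (g : ℝ → ℂ) (z : ℝ) : ℂ :=
  (1 / (2 * Real.pi)) * ∫ ω : ℝ, Complex.exp (-(Complex.I * ω * z)) * g ω

/-- The Bloch transform: `ǧ(ξ,x) = Σ_{k∈ℤ} e^{2πikx} ĝ(ξ + 2πk)`. -/
noncomputable def blochT (g : ℝ → ℂ) (ξ x : ℝ) : ℂ :=
  ∑' k : ℤ, Complex.exp (2 * Real.pi * Complex.I * k * x) * fourierT g (ξ + 2 * Real.pi * k)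

noncomputable def fourierSum (c : ℤ → ℂ) (x : ℝ) : ℂ :=
  ∑' m : ℤ, c m * Complex.exp (2 * Real.pi * Complex.I * m * x)

section

open Real Complex FourierTransform

lemma norm_exp_two_pi_I_mul_intCast_mul (k : ℤ) (x : ℝ) :
    ‖exp (2 * π * I * k * x)‖ = 1 := by
  simp [Complex.norm_exp]

lemma fourierT_eq_fourier (f : ℝ → ℂ) (z : ℝ) :
    fourierT f z = (2 * π : ℂ)⁻¹ * 𝓕 f (z / (2 * π)) := by
  rw [fourierT, Real.fourier_real_eq_integral_exp_smul, one_div]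
  congr 2 with ω
  rw [smul_eq_mul]
  congr 2
  push_cast
  field_simp

lemma SchwartzMap.summable_norm_add_intCast {F : Type*} [NormedAddCommGroup F] [NormedSpace ℝ F]
    (φ : SchwartzMap ℝ F) (a : ℝ) : Summable fun n : ℤ => ‖φ (a + n)‖ := by
  have hdecay := ((SchwartzMap.compSubConstCLM ℝ (-a) φ).isBigO_cocompact_rpow (-2)).norm_left
  refine summable_of_isBigO (Real.summable_abs_int_rpow one_lt_two)
    ((hdecay.comp_tendsto Int.tendsto_coe_cofinite).congr_left fun n => ?_)
  simp [add_comm]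

lemma summable_norm_fourierT_add_two_pi_mul_intCast (h : SchwartzMap ℝ ℂ) (ξ : ℝ) :
    Summable fun k : ℤ => ‖fourierT h (ξ + 2 * π * k)‖ := by
  refine ((𝓕 h).summable_norm_add_intCast (ξ / (2 * π))).mul_left (2 * π)⁻¹ |>.congr fun k => ?_
  rw [fourierT_eq_fourier, norm_mul, SchwartzMap.fourier_coe]
  congr 1
  · simp [abs_of_pos pi_pos]
  · congr 2
    field_simp

lemma tsum_mul_tsum_eq_tsum_tsum_sub_of_summable_norm {R : Type*} [NormedRing R] [CompleteSpace R]
    {f g : ℤ → R} (hf : Summable fun m => ‖f m‖) (hg : Summable fun j => ‖g j‖) :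
    (∑' m, f m) * (∑' j, g j) = ∑' k, ∑' m, f m * g (k - m) := by
  let shear : ℤ × ℤ ≃ ℤ × ℤ :=
    { toFun := fun p => (p.2, p.1 - p.2)
      invFun := fun p => (p.1 + p.2, p.1)
      left_inv := fun p => by simp
      right_inv := fun p => by simp }
  have hsum := summable_mul_of_summable_norm hf hg
  rw [tsum_mul_tsum_of_summable_norm hf hg, ← shear.tsum_eq]
  exact (shear.summable_iff.mpr hsum).tsum_prod

lemma MeasureTheory.Integrable.mul_of_norm_eq_one {u f : ℝ → ℂ} (hf : Integrable f)
    (hu : Continuous u) (hu_norm : ∀ ω, ‖u ω‖ = 1) : Integrable fun ω => u ω * f ω :=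
  hf.bdd_mul hu.aestronglyMeasurable (ae_of_all _ fun ω => (hu_norm ω).le)

lemma fourierT_tsum {F : ℤ → ℝ → ℂ} (hF : ∀ m, Integrable (F m))
    (hF_sum : Summable fun m => ∫ ω, ‖F m ω‖) (z : ℝ) :
    fourierT (fun ω => ∑' m, F m ω) z = ∑' m, fourierT (F m) z := by
  have hnorm : ∀ ω : ℝ, ‖exp (-(I * ω * z))‖ = 1 := fun ω => by simp [norm_exp]
  have hcont : Continuous fun ω : ℝ => exp (-(I * ω * z)) := by fun_prop
  simp only [fourierT]
  rw [tsum_mul_left]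
  congr 1
  simp_rw [← tsum_mul_left]
  refine (integral_tsum_of_summable_integral_norm
    (fun m => (hF m).mul_of_norm_eq_one hcont hnorm) (hF_sum.congr fun m => ?_)).symm
  simp [hnorm]

lemma fourierT_const_mul (a : ℂ) (f : ℝ → ℂ) (z : ℝ) :
    fourierT (fun ω => a * f ω) z = a * fourierT f z := by
  simp only [fourierT, mul_left_comm _ a, integral_const_mul]

lemma fourierT_exp_mul (m : ℤ) (f : ℝ → ℂ) (z : ℝ) :
    fourierT (fun ω => exp (2 * π * I * m * ω) * f ω) z = fourierT f (z - 2 * π * m) := by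
  simp only [fourierT]
  congr 2 with ω
  rw [← mul_assoc, ← Complex.exp_add]
  congr 2
  push_cast
  ring

lemma fourierT_fourierSum_mul {c : ℤ → ℂ} (hc : Summable fun m => ‖c m‖) {f : ℝ → ℂ}
    (hf : Integrable f) (z : ℝ) :
    fourierT (fun ω => fourierSum c ω * f ω) z = ∑' m, c m * fourierT f (z - 2 * π * m) := by
  have hint : ∀ m : ℤ, Integrable fun ω : ℝ => exp (2 * π * I * m * ω) * f ω := fun m =>
    hf.mul_of_norm_eq_one (by fun_prop) (norm_exp_two_pi_I_mul_intCast_mul m)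
  have hsum : Summable fun m => ∫ ω : ℝ, ‖c m * (exp (2 * π * I * m * ω) * f ω)‖ :=
    (hc.mul_right (∫ ω, ‖f ω‖)).congr fun m => by
      simp [norm_exp_two_pi_I_mul_intCast_mul, integral_const_mul]
  have hexpand : (fun ω => fourierSum c ω * f ω)
      = fun ω : ℝ => ∑' m : ℤ, c m * (exp (2 * π * I * m * ω) * f ω) := funext fun ω => by
    rw [fourierSum, ← tsum_mul_right]
    exact tsum_congr fun m => mul_assoc _ _ _
  rw [hexpand, fourierT_tsum (fun m => (hint m).const_mul (c m)) hsum]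
  simp only [fourierT_const_mul, fourierT_exp_mul]

lemma blochT_fourierSum_mul {c : ℤ → ℂ} (hc : Summable fun m => ‖c m‖) {f : ℝ → ℂ}
    (hf : Integrable f) {ξ : ℝ} (hf_bloch : Summable fun k : ℤ => ‖fourierT f (ξ + 2 * π * k)‖)
    (x : ℝ) :
    blochT (fun y => fourierSum c y * f y) ξ x = fourierSum c x * blochT f ξ x := by
  have hc' : Summable fun m : ℤ => ‖c m * exp (2 * π * I * m * x)‖ :=
    hc.congr fun m => by rw [norm_mul, norm_exp_two_pi_I_mul_intCast_mul, mul_one]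
  have hf' : Summable fun j : ℤ => ‖exp (2 * π * I * j * x) * fourierT f (ξ + 2 * π * j)‖ :=
    hf_bloch.congr fun j => by rw [norm_mul, norm_exp_two_pi_I_mul_intCast_mul, one_mul]
  rw [blochT, blochT, fourierSum, tsum_mul_tsum_eq_tsum_tsum_sub_of_summable_norm hc' hf']
  refine tsum_congr fun k => ?_
  rw [fourierT_fourierSum_mul hc hf, ← tsum_mul_left]
  refine tsum_congr fun m => ?_
  have hexp : exp (2 * π * I * m * x) * exp (2 * π * I * ↑(k - m) * x)
      = exp (2 * π * I * k * x) := by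
    rw [← Complex.exp_add]
    congr 1
    push_cast
    ring
  have harg : ξ + 2 * π * ↑(k - m) = ξ + 2 * π * k - 2 * π * m := by
    push_cast
    ring
  rw [← hexp, harg]
  ring

lemma pi_lt_abs_add_two_pi_mul_intCast {ξ : ℝ} (hξ : |ξ| < π) {k : ℤ} (hk : k ≠ 0) :
    π < |ξ + 2 * π * k| := by
  have hk1 : (1 : ℝ) ≤ |(k : ℝ)| := by exact_mod_cast Int.one_le_abs hk
  calc π < 2 * π * |(k : ℝ)| - |ξ| := by nlinarith [pi_pos]
    _ = |2 * π * k| - |-ξ| := by rw [abs_mul, abs_of_pos two_pi_pos, abs_neg]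
    _ ≤ |2 * π * k - -ξ| := abs_sub_abs_le_abs_sub _ _
    _ = |ξ + 2 * π * k| := by ring_nf

lemma blochT_eq_fourierT_of_fourierT_eq_zero {f : ℝ → ℂ}
    (hf : ∀ z : ℝ, π < |z| → fourierT f z = 0) {ξ : ℝ} (hξ : |ξ| < π) (x : ℝ) :
    blochT f ξ x = fourierT f ξ := by
  rw [blochT, tsum_eq_single 0 fun k hk => by
    rw [hf _ (pi_lt_abs_add_two_pi_mul_intCast hξ hk), mul_zero]]
  simp

end

theorem stmt_7_general (g : ℝ → ℂ) (c : ℤ → ℂ)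
    (hc : Summable fun m : ℤ => ‖c m‖)
    (hgF : ∀ x : ℝ, g x = ∑' m : ℤ, c m * Complex.exp (2 * Real.pi * Complex.I * m * x))
    (h : SchwartzMap ℝ ℂ) :
    (∀ ξ x : ℝ, blochT (fun y => g y * h y) ξ x = g x * blochT (fun y => h y) ξ x) ∧
    ((∀ z : ℝ, Real.pi < |z| → fourierT (fun y => h y) z = 0) →
      ∀ ξ : ℝ, |ξ| < Real.pi → ∀ x : ℝ,
        blochT (fun y => g y * h y) ξ x = g x * fourierT (fun y => h y) ξ) := by
  obtain rfl : g = fourierSum c := funext hgF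
  have hmul := fun ξ ↦
    blochT_fourierSum_mul hc h.integrable (summable_norm_fourierT_add_two_pi_mul_intCast h ξ)
  refine ⟨hmul, fun hsupp ξ hξ x => ?_⟩
  rw [hmul, blochT_eq_fourierT_of_fourierT_eq_zero hsupp hξ]

/-- two-scale property of the Bloch transform, Remark
`slowmod_Bloch_rmk`: for `g` continuous `1`-periodic with absolutely convergent Fourier
series and `h` Schwartz, `(gh)ˇ(ξ,x) = g(x) ȟ(ξ,x)`; and if `ĥ` is supported in
`[-π,π]`, then `(gh)ˇ(ξ,x) = g(x) ĥ(ξ)` for `|ξ| < π`. -/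
theorem stmt_7 (g : ℝ → ℂ) (c : ℤ → ℂ)
    (hg_cont : Continuous g) (hg_per : ∀ x, g (x + 1) = g x)
    (hc : Summable fun m : ℤ => ‖c m‖)
    (hgF : ∀ x : ℝ, g x = ∑' m : ℤ, c m * Complex.exp (2 * Real.pi * Complex.I * m * x))
    (h : SchwartzMap ℝ ℂ) :
    (∀ ξ x : ℝ, blochT (fun y => g y * h y) ξ x = g x * blochT (fun y => h y) ξ x) ∧
    ((∀ z : ℝ, Real.pi < |z| → fourierT (fun y => h y) z = 0) →
      ∀ ξ : ℝ, |ξ| < Real.pi → ∀ x : ℝ,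
        blochT (fun y => g y * h y) ξ x = g x * fourierT (fun y => h y) ξ) :=
  stmt_7_general g c hc hgF h
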